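/- Assume n ≥ 3. In the presented group G the elements x_{12}x_{13} and p_{12}p_{13}t_1 commute: (x_{12}x_{13})(p_{12}p_{13}t_1) =_R (p_{12}p_{13}t_1)(x_{12}x_{13}). -/

import Mathlib

namespace PureHilden

/-- The three symbols `p`, `x`, `y`. -/
inductive Sym : Type
  | p | x | y
  deriving DecidableEq

open Sym

/-- Generators of the free group `F`:  `p_{ij}, x_{ij}, y_{ij}` for `1 ≤ i < j ≤ n`
and `t_k` for `1 ≤ k ≤ n`. -/
inductive Gen (n : ℕ) : Type
  | pair (s : Sym) (i j : ℕ) (h : 1 ≤ i ∧ i < j ∧ j ≤ n) : Gen n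
  | t (k : ℕ) (h : 1 ≤ k ∧ k ≤ n) : Gen n

/-- The free group `F` on the set `S`. -/
abbrev FG (n : ℕ) := FreeGroup (Gen n)

/-- `α_{ij}` (symmetrised: `α_{ji} = α_{ij}`); junk value `1` for invalid indices. -/
def gsym (n : ℕ) (s : Sym) (i j : ℕ) : FG n :=
  if h : 1 ≤ min i j ∧ min i j < max i j ∧ max i j ≤ n then
    FreeGroup.of (Gen.pair s (min i j) (max i j) h)
  else 1

def P (n i j : ℕ) : FG n := gsym n Sym.p i j
def X (n i j : ℕ) : FG n := gsym n Sym.x i j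
def Y (n i j : ℕ) : FG n := gsym n Sym.y i j

def T (n k : ℕ) : FG n :=
  if h : 1 ≤ k ∧ k ≤ n then FreeGroup.of (Gen.t k h) else 1

/-- `1 ≤ k ≤ n`. -/
def Idx (n k : ℕ) : Prop := 1 ≤ k ∧ k ≤ n

/-- `1 ≤ i < j ≤ n`. -/
def Idx2 (n i j : ℕ) : Prop := 1 ≤ i ∧ i < j ∧ j ≤ n

/-- `(i,j,k)` is a cyclic rotation of a strictly increasing triple. -/
def cyc3 (i j k : ℕ) : Prop := (i < j ∧ j < k) ∨ (j < k ∧ k < i) ∨ (k < i ∧ i < j)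

/-- `(i,j,k,l)` is a cyclic rotation of a strictly increasing quadruple. -/
def cyc4 (i j k l : ℕ) : Prop :=
  (i < j ∧ j < k ∧ k < l) ∨ (j < k ∧ k < l ∧ l < i) ∨
  (k < l ∧ l < i ∧ i < j) ∨ (l < i ∧ i < j ∧ j < k)

def c2A : List (Sym × Sym × Sym) :=
  [(p,p,p),(p,y,y),(x,p,p),(x,x,p),(x,y,y),(y,p,p),(y,p,x),(y,y,y)]
def c2B : List (Sym × Sym × Sym) :=
  [(p,p,p),(p,x,y),(x,p,p),(x,p,x),(x,x,y),(y,p,p),(y,x,y),(y,y,p)]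
def c2C : List (Sym × Sym × Sym) :=
  [(p,p,p),(p,x,x),(x,p,p),(x,x,x),(x,y,p),(y,p,p),(y,p,y),(y,x,x)]

/-- The allowed triples `(α,β,γ)` for relation (C2), by cyclic ordering of `(i,j,k)`. -/
def C2ok (i j k : ℕ) (a b c : Sym) : Prop :=
  (i < j ∧ j < k ∧ (a,b,c) ∈ c2A) ∨
  (j < k ∧ k < i ∧ (a,b,c) ∈ c2B) ∨
  (k < i ∧ i < j ∧ (a,b,c) ∈ c2C)

/-- The relations `R`, encoded as the words `u * v⁻¹` for each relation `u = v`. -/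
inductive Rel (n : ℕ) : FG n → Prop
  | cpt {i j k : ℕ} (hij : Idx2 n i j) (hk : Idx n k) :
      Rel n (P n i j * T n k * (T n k * P n i j)⁻¹)
  | ctt {i j : ℕ} (hi : Idx n i) (hj : Idx n j) :
      Rel n (T n i * T n j * (T n j * T n i)⁻¹)
  | cxt {i j k : ℕ} (hij : Idx2 n i j) (hk : Idx n k) (hne : k ≠ i) :
      Rel n (X n i j * T n k * (T n k * X n i j)⁻¹)
  | cyt {i j k : ℕ} (hij : Idx2 n i j) (hk : Idx n k) (hne : k ≠ j) :
      Rel n (Y n i j * T n k * (T n k * Y n i j)⁻¹)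
  | c1 (a b : Sym) {i j k l : ℕ} (hi : Idx n i) (hj : Idx n j) (hk : Idx n k)
      (hl : Idx n l) (hc : cyc4 i j k l) :
      Rel n (gsym n a i j * gsym n b k l * (gsym n b k l * gsym n a i j)⁻¹)
  | c2 (a b c : Sym) {i j k : ℕ} (hi : Idx n i) (hj : Idx n j) (hk : Idx n k)
      (h : C2ok i j k a b c) :
      Rel n (gsym n a i j * (gsym n b i k * gsym n c j k) *
             (gsym n b i k * gsym n c j k * gsym n a i j)⁻¹)
  | c3 (a b : Sym) {i j k l : ℕ} (hi : Idx n i) (hj : Idx n j) (hk : Idx n k)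
      (hl : Idx n l) (hc : cyc4 i j k l) :
      Rel n (gsym n a i k * (P n j k * gsym n b j l * (P n j k)⁻¹) *
             (P n j k * gsym n b j l * (P n j k)⁻¹ * gsym n a i k)⁻¹)
  | mx {i j : ℕ} (hij : Idx2 n i j) :
      Rel n (X n i j * P n i j * T n i * (P n i j * T n i * X n i j)⁻¹)
  | my {i j : ℕ} (hij : Idx2 n i j) :
      Rel n (Y n i j * P n i j * T n j * (P n i j * T n j * Y n i j)⁻¹)

/-- The presented group `G = ⟨S ∣ R⟩`. -/
abbrev GG (n : ℕ) := FG n ⧸ Subgroup.normalClosure {w : FG n | Rel n w}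

/-- The quotient homomorphism `π : F → G`. -/
def piG (n : ℕ) : FG n →* GG n := QuotientGroup.mk' _

/-- The map defining `Φ_{σ_m}` on generators. -/
def phiSigmaMap (n m : ℕ) : Gen n → FG n
  | Gen.pair s i j _ =>
      if i = m ∧ j = m + 1 then
        match s with
        | Sym.p => P n m (m+1)
        | Sym.x => (T n (m+1))⁻¹ * Y n m (m+1) * T n (m+1)
        | Sym.y => X n m (m+1)
      else if i = m then gsym n s (m+1) j
      else if j = m then gsym n s (m+1) i
      else if i = m + 1 then P n m (m+1) * gsym n s m j * (P n m (m+1))⁻¹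
      else if j = m + 1 then P n m (m+1) * gsym n s m i * (P n m (m+1))⁻¹
      else gsym n s i j
  | Gen.t k _ =>
      if k = m then T n (m+1) else if k = m + 1 then T n m else T n k

/-- `Φ_{σ_m} : F → F`. -/
def phiSigma (n m : ℕ) : FG n →* FG n := FreeGroup.lift (phiSigmaMap n m)

/-- The map defining `Ψ_{σ_m}` on generators. -/
def psiSigmaMap (n m : ℕ) : Gen n → FG n
  | Gen.pair s i j _ =>
      if i = m ∧ j = m + 1 then
        match s with
        | Sym.p => P n m (m+1)
        | Sym.x => Y n m (m+1)
        | Sym.y => T n m * X n m (m+1) * (T n m)⁻¹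
      else if i = m then (P n m (m+1))⁻¹ * gsym n s (m+1) j * P n m (m+1)
      else if j = m then (P n m (m+1))⁻¹ * gsym n s (m+1) i * P n m (m+1)
      else if i = m + 1 then gsym n s m j
      else if j = m + 1 then gsym n s m i
      else gsym n s i j
  | Gen.t k _ =>
      if k = m then T n (m+1) else if k = m + 1 then T n m else T n k

/-- `Ψ_{σ_m} : F → F`. -/
def psiSigma (n m : ℕ) : FG n →* FG n := FreeGroup.lift (psiSigmaMap n m)

/-- The map defining `Φ_{τ_m}` on generators. -/
def phiTauMap (n m : ℕ) : Gen n → FG n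
  | Gen.pair s i j _ =>
      match s with
      | Sym.p => P n i j
      | Sym.x => if m = i then (X n i j)⁻¹ * P n i j else X n i j
      | Sym.y => if m = j then (Y n i j)⁻¹ * P n i j else Y n i j
  | Gen.t k _ => T n k

/-- `Φ_{τ_m} : F → F`. -/
def phiTau (n m : ℕ) : FG n →* FG n := FreeGroup.lift (phiTauMap n m)

/-- The map defining `Ψ_{τ_m}` on generators. -/
def psiTauMap (n m : ℕ) : Gen n → FG n
  | Gen.pair s i j _ =>
      match s with
      | Sym.p => P n i j
      | Sym.x => if m = i then P n i j * (X n i j)⁻¹ else X n i j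
      | Sym.y => if m = j then P n i j * (Y n i j)⁻¹ else Y n i j
  | Gen.t k _ => T n k

/-- `Ψ_{τ_m} : F → F`. -/
def psiTau (n m : ℕ) : FG n →* FG n := FreeGroup.lift (psiTauMap n m)

/-
Write a = x₁₂, b = x₁₃, p = p₁₂, q = p₁₃, r = p₂₃, t = t₁. The element D = p q r t factors
both as (p t)(q r) and as (q t)(r p); relation (M-x) makes a commute with p t and b with q t,
and (C2) makes a commute with q r and b with r p. Hence a b commutes with D, and also with r
by (C2), so it commutes with D r⁻¹ = p q t.
-/

theorem commute_mul_pqt_of_commute {G : Type*} [Group G] {a b p q r t : G}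
    (hapt : Commute a (p * t)) (haqr : Commute a (q * r))
    (hbqt : Commute b (q * t)) (hbrp : Commute b (r * p))
    (hpqr : Commute p (q * r)) (hrab : Commute r (a * b))
    (hpt : Commute p t) (hqt : Commute q t) (hrt : Commute r t) :
    Commute (a * b) (p * q * t) := by
  have hD₁ : p * t * (q * r) = p * q * r * t := by
    rw [mul_assoc, ((hqt.mul_left hrt).symm).eq, ← mul_assoc, ← mul_assoc]
  have hD₂ : q * t * (r * p) = p * q * r * t := by
    rw [mul_assoc, ((hrt.mul_left hpt).symm).eq, ← mul_assoc, ← mul_assoc, ← hpqr.eq,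
      ← mul_assoc]
  have habD : Commute (a * b) (p * q * r * t) :=
    (hD₁ ▸ hapt.mul_right haqr).mul_left (hD₂ ▸ hbqt.mul_right hbrp)
  have hpqt : p * q * t = p * q * r * t * r⁻¹ := by
    rw [mul_assoc (p * q) r t, hrt.eq, ← mul_assoc, mul_inv_cancel_right]
  rw [hpqt]
  exact habD.mul_right hrab.symm.inv_right

section Relations

variable {n : ℕ}

theorem piG_eq_of_rel {u v : FG n} (h : Rel n (u * v⁻¹)) : piG n u = piG n v := by
  have h₁ : piG n (u * v⁻¹) = 1 :=
    (QuotientGroup.eq_one_iff _).mpr (Subgroup.subset_normalClosure h)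
  rwa [map_mul, map_inv, mul_inv_eq_one] at h₁

theorem commute_of_rel {u v : FG n} (h : Rel n (u * v * (v * u)⁻¹)) :
    Commute (piG n u) (piG n v) := by
  simpa only [Commute, SemiconjBy, map_mul] using piG_eq_of_rel h

theorem gsym_comm (s : Sym) (i j : ℕ) : gsym n s i j = gsym n s j i := by
  unfold gsym
  rw [min_comm, max_comm]

theorem commute_P_T {i j k : ℕ} (hij : Idx2 n i j) (hk : Idx n k) :
    Commute (piG n (P n i j)) (piG n (T n k)) :=
  commute_of_rel (Rel.cpt hij hk)

theorem commute_X_PT {i j : ℕ} (hij : Idx2 n i j) :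
    Commute (piG n (X n i j)) (piG n (P n i j) * piG n (T n i)) := by
  have h := piG_eq_of_rel (Rel.mx hij)
  simp only [map_mul] at h
  exact (mul_assoc _ _ _).symm.trans h

variable {i j k : ℕ}

theorem commute_P_PP (hi : 1 ≤ i) (hij : i < j) (hjk : j < k) (hk : k ≤ n) :
    Commute (piG n (P n i j)) (piG n (P n i k) * piG n (P n j k)) := by
  have h := commute_of_rel (Rel.c2 Sym.p Sym.p Sym.p ⟨hi, by omega⟩ ⟨by omega, by omega⟩
    ⟨by omega, hk⟩ (Or.inl ⟨hij, hjk, by decide⟩))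
  rwa [map_mul] at h

theorem commute_X_PP (hi : 1 ≤ i) (hij : i < j) (hjk : j < k) (hk : k ≤ n) :
    Commute (piG n (X n i j)) (piG n (P n i k) * piG n (P n j k)) := by
  have h := commute_of_rel (Rel.c2 Sym.x Sym.p Sym.p ⟨hi, by omega⟩ ⟨by omega, by omega⟩
    ⟨by omega, hk⟩ (Or.inl ⟨hij, hjk, by decide⟩))
  rwa [map_mul] at h

theorem commute_X_PP_rotate (hi : 1 ≤ i) (hij : i < j) (hjk : j < k) (hk : k ≤ n) :
    Commute (piG n (X n i k)) (piG n (P n j k) * piG n (P n i j)) := by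
  have h := commute_of_rel (Rel.c2 Sym.x Sym.p Sym.p ⟨by omega, hk⟩ ⟨hi, by omega⟩
    ⟨by omega, by omega⟩ (Or.inr (Or.inl ⟨hij, hjk, by decide⟩)))
  rwa [gsym_comm Sym.x k i, gsym_comm Sym.p k j, map_mul] at h

theorem commute_P_XX (hi : 1 ≤ i) (hij : i < j) (hjk : j < k) (hk : k ≤ n) :
    Commute (piG n (P n j k)) (piG n (X n i j) * piG n (X n i k)) := by
  have h := commute_of_rel (Rel.c2 Sym.p Sym.x Sym.x ⟨by omega, by omega⟩ ⟨by omega, hk⟩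
    ⟨hi, by omega⟩ (Or.inr (Or.inr ⟨hij, hjk, by decide⟩)))
  rwa [gsym_comm Sym.x j i, gsym_comm Sym.x k i, map_mul] at h

end Relations

/-- STATEMENT 7: For `n ≥ 3`, in `G` the elements `x₁₂x₁₃` and `p₁₂p₁₃t₁`
commute. -/
theorem x12x13_comm_p12p13t1 (n : ℕ) (hn : 3 ≤ n) :
    piG n (X n 1 2 * X n 1 3 * (P n 1 2 * P n 1 3 * T n 1)) =
    piG n (P n 1 2 * P n 1 3 * T n 1 * (X n 1 2 * X n 1 3)) := by
  have h₁₂ : Idx2 n 1 2 := ⟨le_rfl, by norm_num, by omega⟩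
  have h₁₃ : Idx2 n 1 3 := ⟨le_rfl, by norm_num, by omega⟩
  have h₂₃ : Idx2 n 2 3 := ⟨by norm_num, by norm_num, hn⟩
  have h₁ : Idx n 1 := ⟨le_rfl, by omega⟩
  simp only [map_mul]
  exact (commute_mul_pqt_of_commute (commute_X_PT h₁₂)
    (commute_X_PP le_rfl one_lt_two (by norm_num) hn) (commute_X_PT h₁₃)
    (commute_X_PP_rotate le_rfl one_lt_two (by norm_num) hn)
    (commute_P_PP le_rfl one_lt_two (by norm_num) hn)
    (commute_P_XX le_rfl one_lt_two (by norm_num) hn)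
    (commute_P_T h₁₂ h₁) (commute_P_T h₁₃ h₁) (commute_P_T h₂₃ h₁)).eq

end PureHilden
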